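/- arXiv:1402.5048 — 4 statements merged into one kernel-verified Lean document; each statement's English description precedes it below -/
import Mathlib

section
/- Let M ⊆ ℝⁿ be open with a parallelism (X₁,…,X_n) and structure functions γᵢⱼᵏ. On M × ℝⁿ define the vector fields Z_i = X_i − Σ_{j,k} u_j γᵢⱼᵏ ∂_k (where u₁,…,u_n are the coordinates on the ℝⁿ factor and ∂_k their coordinate vector fields). Then for all i₁, i₂, the bracket satisfies [Z_{i₁}, Z_{i₂}] = Σ_k γ_{i₁i₂}ᵏ Z_k + Σ_p ((Σⱼ uⱼ Xⱼ).γ_{i₁i₂}ᵖ) ∂_p, where (Σⱼ uⱼ Xⱼ).γ denotes the derivative of γ along the vector field Σⱼ uⱼ Xⱼ at the base point. -/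
open VectorField

lemma coeff_ext {n : ℕ} {v : Fin n → Fin n → ℝ} (h : LinearIndependent ℝ v)
    {c d : Fin n → ℝ} (hcd : ∑ k, c k • v k = ∑ k, d k • v k) : ∀ k, c k = d k := by
  have h2 := Fintype.linearIndependent_iff.1 h (c - d)
  have h0 : ∑ k, (c - d) k • v k = 0 := by
    simp only [Pi.sub_apply, sub_smul, Finset.sum_sub_distrib, hcd, sub_self]
  intro k
  simpa [sub_eq_zero] using h2 h0 k

lemma bracket_expand {E : Type*} [NormedAddCommGroup E] [NormedSpace ℝ E]
    {n : ℕ} {V : E → E} {g : Fin n → E → ℝ} {W : Fin n → E → E} {x : E}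
    (hV : DifferentiableAt ℝ V x) (hg : ∀ i, DifferentiableAt ℝ (g i) x)
    (hW : ∀ i, DifferentiableAt ℝ (W i) x) :
    lieBracket ℝ V (fun y => ∑ i, g i y • W i y) x =
      ∑ i, (fderiv ℝ (g i) x (V x)) • W i x + ∑ i, g i x • lieBracket ℝ V (W i) x := by
  have hd : fderiv ℝ (fun y => ∑ i, g i y • W i y) x =
      ∑ i, (g i x • fderiv ℝ (W i) x + (fderiv ℝ (g i) x).smulRight (W i x)) := by
    have : HasFDerivAt (fun y => ∑ i, g i y • W i y)
        (∑ i, (g i x • fderiv ℝ (W i) x + (fderiv ℝ (g i) x).smulRight (W i x))) x :=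
      HasFDerivAt.fun_sum fun i _ => ((hg i).hasFDerivAt).smul ((hW i).hasFDerivAt)
    exact this.fderiv
  simp only [lieBracket, hd]
  simp only [ContinuousLinearMap.sum_apply, ContinuousLinearMap.add_apply,
    ContinuousLinearMap.smul_apply, ContinuousLinearMap.smulRight_apply, map_sum, map_smul]
  rw [← Finset.sum_sub_distrib, ← Finset.sum_add_distrib]
  refine Finset.sum_congr rfl fun i _ => ?_
  rw [smul_sub]
  abel

section
variable {n : ℕ} {M : Set (Fin n → ℝ)} (hM : IsOpen M)
    {X : Fin n → (Fin n → ℝ) → (Fin n → ℝ)}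
    (hXsm : ∀ i, ContDiffOn ℝ (⊤ : ℕ∞) (X i) M)
    (hindep : ∀ x ∈ M, LinearIndependent ℝ (fun i => X i x))
    {γ : Fin n → Fin n → Fin n → (Fin n → ℝ) → ℝ}
    (hγsm : ∀ i j k, ContDiffOn ℝ (⊤ : ℕ∞) (γ i j k) M)
    (hstruct : ∀ i j, ∀ x ∈ M,
      lieBracket ℝ (X i) (X j) x = ∑ k, γ i j k x • X k x)

include hM hXsm in
lemma Xdiff : ∀ i, ∀ x ∈ M, DifferentiableAt ℝ (X i) x := fun i x hx =>
  ((hXsm i).contDiffAt (hM.mem_nhds hx)).differentiableAt (by simp)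

include hM hγsm in
lemma γdiff : ∀ i j k, ∀ x ∈ M, DifferentiableAt ℝ (γ i j k) x := fun i j k x hx =>
  ((hγsm i j k).contDiffAt (hM.mem_nhds hx)).differentiableAt (by simp)

include hM hXsm hγsm hstruct in
/-- Expansion of double bracket. -/
lemma dbl_bracket : ∀ a b c, ∀ x ∈ M,
    lieBracket ℝ (X a) (lieBracket ℝ (X b) (X c)) x =
      ∑ k, (fderiv ℝ (γ b c k) x (X a x) + ∑ m, γ b c m x * γ a m k x) • X k x := by
  intro a b c x hx
  have h1 : lieBracket ℝ (X a) (lieBracket ℝ (X b) (X c)) x =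
      lieBracket ℝ (X a) (fun y => ∑ k, γ b c k y • X k y) x := by
    apply Filter.EventuallyEq.lieBracket_vectorField_eq (Filter.EventuallyEq.rfl)
    filter_upwards [hM.mem_nhds hx] with y hy
    exact hstruct b c y hy
  rw [h1, bracket_expand (Xdiff hM hXsm a x hx) (fun k => γdiff hM hγsm b c k x hx)
    (fun k => Xdiff hM hXsm k x hx)]
  have h2 : ∑ i, γ b c i x • lieBracket ℝ (X a) (X i) x
      = ∑ k, (∑ m, γ b c m x * γ a m k x) • X k x := by
    calc ∑ i, γ b c i x • lieBracket ℝ (X a) (X i) x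
        = ∑ i, ∑ k, (γ b c i x * γ a i k x) • X k x := by
          refine Finset.sum_congr rfl fun i _ => ?_
          rw [hstruct a i x hx, Finset.smul_sum]
          simp [smul_smul]
      _ = ∑ k, (∑ m, γ b c m x * γ a m k x) • X k x := by
          rw [Finset.sum_comm]
          exact Finset.sum_congr rfl fun k _ => by rw [Finset.sum_smul]
  rw [h2, ← Finset.sum_add_distrib]
  exact Finset.sum_congr rfl fun k _ => by rw [add_smul]

include hM hindep hstruct in
lemma γanti : ∀ i j k, ∀ x ∈ M, γ j i k x = -γ i j k x := by
  intro i j k x hx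
  have h : ∑ k, γ j i k x • X k x = ∑ k, (-γ i j k x) • X k x := by
    rw [← hstruct j i x hx, lieBracket_swap, hstruct i j x hx, ← Finset.sum_neg_distrib]
    exact Finset.sum_congr rfl fun k _ => by rw [neg_smul]
  exact coeff_ext (hindep x hx) h k

include hM hXsm hindep hγsm hstruct in
lemma jacobi_key : ∀ i₁ i₂ j k, ∀ x ∈ M,
    fderiv ℝ (γ i₁ i₂ k) x (X j x) + ∑ m, γ i₁ i₂ m x * γ j m k x
    = (fderiv ℝ (γ i₁ j k) x (X i₂ x) + ∑ m, γ i₁ j m x * γ i₂ m k x)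
      - (fderiv ℝ (γ i₂ j k) x (X i₁ x) + ∑ m, γ i₂ j m x * γ i₁ m k x) := by
  intro i₁ i₂ j k x hx
  have hc2 : ∀ i, ContDiffAt ℝ 2 (X i) x := fun i =>
    ((hXsm i).contDiffAt (hM.mem_nhds hx)).of_le (WithTop.coe_le_coe.2 le_top)
  have hleib := leibniz_identity_lieBracket (by simp [minSmoothness_of_isRCLikeNormedField]) (hc2 i₁) (hc2 i₂) (hc2 j)
  have hswap : lieBracket ℝ (lieBracket ℝ (X i₁) (X i₂)) (X j) x
      = - lieBracket ℝ (X j) (lieBracket ℝ (X i₁) (X i₂)) x := by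
    rw [lieBracket_swap]
  rw [dbl_bracket hM hXsm hγsm hstruct i₁ i₂ j x hx, hswap,
    dbl_bracket hM hXsm hγsm hstruct j i₁ i₂ x hx,
    dbl_bracket hM hXsm hγsm hstruct i₂ i₁ j x hx] at hleib
  have h : ∑ k, (fderiv ℝ (γ i₂ j k) x (X i₁ x) + ∑ m, γ i₂ j m x * γ i₁ m k x) • X k x
      = ∑ k, ((fderiv ℝ (γ i₁ j k) x (X i₂ x) + ∑ m, γ i₁ j m x * γ i₂ m k x)
          - (fderiv ℝ (γ i₁ i₂ k) x (X j x) + ∑ m, γ i₁ i₂ m x * γ j m k x)) • X k x := by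
    rw [hleib]
    rw [← Finset.sum_neg_distrib, ← Finset.sum_add_distrib]
    exact Finset.sum_congr rfl fun k _ => by rw [sub_smul]; abel
  have := coeff_ext (hindep x hx) h k
  linarith [this]

end

section
variable {n : ℕ} {M : Set (Fin n → ℝ)} (hM : IsOpen M)
    {X : Fin n → (Fin n → ℝ) → (Fin n → ℝ)}
    (hXsm : ∀ i, ContDiffOn ℝ (⊤ : ℕ∞) (X i) M)
    {γ : Fin n → Fin n → Fin n → (Fin n → ℝ) → ℝ}
    (hγsm : ∀ i j k, ContDiffOn ℝ (⊤ : ℕ∞) (γ i j k) M)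

include hM hXsm hγsm in
lemma Zap {Z : Fin n → (Fin n → ℝ) × (Fin n → ℝ) → (Fin n → ℝ) × (Fin n → ℝ)}
    (hZ : ∀ i q, Z i q = (X i q.1, fun k => -(∑ j, q.2 j * γ i j k q.1)))
    (i : Fin n) (q : (Fin n → ℝ) × (Fin n → ℝ)) (hq : q.1 ∈ M)
    (v : (Fin n → ℝ) × (Fin n → ℝ)) :
    fderiv ℝ (Z i) q v = (fderiv ℝ (X i) q.1 v.1,
      fun k => -(∑ j, (q.2 j * fderiv ℝ (γ i j k) q.1 v.1 + γ i j k q.1 * v.2 j))) := by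
  have hZi : Z i = fun q => ((X i q.1, fun k => -(∑ j, q.2 j * γ i j k q.1)) :
      (Fin n → ℝ) × (Fin n → ℝ)) := funext (hZ i)
  have hXd : DifferentiableAt ℝ (X i) q.1 :=
    ((hXsm i).contDiffAt (hM.mem_nhds hq)).differentiableAt (by simp)
  have hγd : ∀ j k, DifferentiableAt ℝ (γ i j k) q.1 := fun j k =>
    ((hγsm i j k).contDiffAt (hM.mem_nhds hq)).differentiableAt (by simp)
  have h1 : HasFDerivAt (fun q : (Fin n → ℝ) × (Fin n → ℝ) => X i q.1)
      ((fderiv ℝ (X i) q.1).comp (ContinuousLinearMap.fst ℝ _ _)) q :=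
    (hXd.hasFDerivAt).comp q hasFDerivAt_fst
  have h2 : ∀ k, HasFDerivAt (fun q : (Fin n → ℝ) × (Fin n → ℝ) => -(∑ j, q.2 j * γ i j k q.1))
      (-(∑ j, (q.2 j • ((fderiv ℝ (γ i j k) q.1).comp (ContinuousLinearMap.fst ℝ _ _))
          + γ i j k q.1 • ((ContinuousLinearMap.proj j).comp
              (ContinuousLinearMap.snd ℝ (Fin n → ℝ) (Fin n → ℝ)))))) q := by
    intro k
    refine HasFDerivAt.neg ?_
    refine HasFDerivAt.fun_sum fun j _ => ?_
    have ha : HasFDerivAt (fun q : (Fin n → ℝ) × (Fin n → ℝ) => q.2 j)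
        ((ContinuousLinearMap.proj j).comp (ContinuousLinearMap.snd ℝ (Fin n → ℝ) (Fin n → ℝ))) q :=
      ((ContinuousLinearMap.proj (R := ℝ) (φ := fun _ : Fin n => ℝ) j).comp
        (ContinuousLinearMap.snd ℝ (Fin n → ℝ) (Fin n → ℝ))).hasFDerivAt
    have hb : HasFDerivAt (fun q : (Fin n → ℝ) × (Fin n → ℝ) => γ i j k q.1)
        ((fderiv ℝ (γ i j k) q.1).comp (ContinuousLinearMap.fst ℝ _ _)) q :=
      ((hγd j k).hasFDerivAt).comp q hasFDerivAt_fst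
    exact ha.mul hb
  have hZd : HasFDerivAt (Z i)
      (((fderiv ℝ (X i) q.1).comp (ContinuousLinearMap.fst ℝ _ _)).prod
        (ContinuousLinearMap.pi fun k =>
          (-(∑ j, (q.2 j • ((fderiv ℝ (γ i j k) q.1).comp (ContinuousLinearMap.fst ℝ _ _))
          + γ i j k q.1 • ((ContinuousLinearMap.proj j).comp
              (ContinuousLinearMap.snd ℝ (Fin n → ℝ) (Fin n → ℝ)))))))) q := by
    rw [hZi]
    exact HasFDerivAt.prodMk h1 (hasFDerivAt_pi.2 h2)
  rw [hZd.fderiv]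
  refine Prod.ext rfl (funext fun k => ?_)
  simp [ContinuousLinearMap.pi_apply, mul_comm]

end

lemma alg_sum {n : ℕ} (u A A' B B' : Fin n → ℝ) (C C' : Fin n → Fin n → ℝ) :
    (-(∑ j, (u j * A j + B j * (-(∑ m, u m * C m j)))))
      - (-(∑ j, (u j * A' j + B' j * (-(∑ m, u m * C' m j)))))
    = ∑ j, u j * ((A' j + ∑ m, C j m * B m) - (A j + ∑ m, C' j m * B' m)) := by
  have h1 : ∑ j, B j * (∑ m, u m * C m j) = ∑ j, u j * ∑ m, C j m * B m := by
    simp only [Finset.mul_sum]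
    rw [Finset.sum_comm]
    exact Finset.sum_congr rfl fun j _ => Finset.sum_congr rfl fun m _ => by ring
  have h2 : ∑ j, B' j * (∑ m, u m * C' m j) = ∑ j, u j * ∑ m, C' j m * B' m := by
    simp only [Finset.mul_sum]
    rw [Finset.sum_comm]
    exact Finset.sum_congr rfl fun j _ => Finset.sum_congr rfl fun m _ => by ring
  simp only [mul_neg, neg_add, neg_neg, Finset.sum_add_distrib, Finset.sum_neg_distrib,
    sub_eq_add_neg, neg_sub]
  rw [h1, h2]
  simp only [mul_sub, mul_add, mul_neg, Finset.sum_add_distrib, Finset.sum_neg_distrib,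
    neg_smul, one_smul]
  abel

/-- On `M × ℝⁿ` (for `M ⊆ ℝⁿ` open with parallelism `(X₁,…,X_n)` of structure functions
`γᵢⱼᵏ`), define the vector fields `Z_i = X_i − Σ_{j,k} u_j γᵢⱼᵏ ∂_k`, where `u` is the
second-factor coordinate.  Then
`[Z_{i₁}, Z_{i₂}] = Σ_k γ_{i₁i₂}ᵏ Z_k + Σ_p ((Σⱼ uⱼ Xⱼ).γ_{i₁i₂}ᵖ) ∂_p`. -/
theorem graph_fields_bracket
    {n : ℕ} (M : Set (Fin n → ℝ)) (hM : IsOpen M)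
    (X : Fin n → (Fin n → ℝ) → (Fin n → ℝ))
    (hXsm : ∀ i, ContDiffOn ℝ (⊤ : ℕ∞) (X i) M)
    (hindep : ∀ x ∈ M, LinearIndependent ℝ (fun i => X i x))
    (γ : Fin n → Fin n → Fin n → (Fin n → ℝ) → ℝ)
    (hγsm : ∀ i j k, ContDiffOn ℝ (⊤ : ℕ∞) (γ i j k) M)
    (hstruct : ∀ i j, ∀ x ∈ M,
      lieBracket ℝ (X i) (X j) x = ∑ k, γ i j k x • X k x)
    (Z : Fin n → (Fin n → ℝ) × (Fin n → ℝ) → (Fin n → ℝ) × (Fin n → ℝ))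
    (hZ : ∀ i q, Z i q = (X i q.1, fun k => -(∑ j, q.2 j * γ i j k q.1))) :
    ∀ (i₁ i₂ : Fin n), ∀ q ∈ M ×ˢ (Set.univ : Set (Fin n → ℝ)),
      lieBracket ℝ (Z i₁) (Z i₂) q =
        (∑ k, γ i₁ i₂ k q.1 • Z k q) +
          (0, fun p => ∑ j, q.2 j * fderiv ℝ (γ i₁ i₂ p) q.1 (X j q.1)) := by
  intro i₁ i₂ q hq
  have hq1 : q.1 ∈ M := hq.1
  set x := q.1 with hx
  set u := q.2 with hu
  -- the bracket via Zap
  have hb : lieBracket ℝ (Z i₁) (Z i₂) q =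
      fderiv ℝ (Z i₂) q (Z i₁ q) - fderiv ℝ (Z i₁) q (Z i₂ q) := rfl
  rw [hb, Zap hM hXsm hγsm hZ i₂ q hq1 (Z i₁ q), Zap hM hXsm hγsm hZ i₁ q hq1 (Z i₂ q),
    hZ i₁ q, hZ i₂ q]
  -- now everything is explicit; compare components
  refine Prod.ext ?_ ?_
  · -- first components
    show fderiv ℝ (X i₂) x (X i₁ x) - fderiv ℝ (X i₁) x (X i₂ x) = _
    have : fderiv ℝ (X i₂) x (X i₁ x) - fderiv ℝ (X i₁) x (X i₂ x)
        = lieBracket ℝ (X i₁) (X i₂) x := rfl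
    rw [this, hstruct i₁ i₂ x hq1]
    simp [hZ, Prod.fst_sum]
    rfl
  · -- second components
    have key : ∀ j k, ((fderiv ℝ (γ i₁ j k) x (X i₂ x) + ∑ m, γ i₁ j m x * γ i₂ m k x)
        - (fderiv ℝ (γ i₂ j k) x (X i₁ x) + ∑ m, γ i₂ j m x * γ i₁ m k x))
        = fderiv ℝ (γ i₁ i₂ k) x (X j x) - ∑ m, γ i₁ i₂ m x * γ m j k x := by
      intro j k
      have h1 := jacobi_key hM hXsm hindep hγsm hstruct i₁ i₂ j k x hq1
      have h2 : ∑ m, γ i₁ i₂ m x * γ j m k x = -∑ m, γ i₁ i₂ m x * γ m j k x := by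
        rw [← Finset.sum_neg_distrib]
        exact Finset.sum_congr rfl fun m _ => by
          rw [γanti hM hindep hstruct m j k x hq1]; ring
      rw [← h1, h2]; ring
    funext k
    simp only [Prod.mk_sub_mk, Prod.snd_add, Prod.snd_sum, Prod.smul_snd, hZ, Pi.sub_apply,
      Pi.add_apply, Finset.sum_apply, Pi.smul_apply, smul_eq_mul, Pi.neg_apply]
    rw [alg_sum q.2 (fun j => fderiv ℝ (γ i₂ j k) x (X i₁ x))
      (fun j => fderiv ℝ (γ i₁ j k) x (X i₂ x))
      (fun j => γ i₂ j k x) (fun j => γ i₁ j k x)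
      (fun m j => γ i₁ m j x) (fun m j => γ i₂ m j x)]
    have hrhs : ∑ m, γ i₁ i₂ m x * (-(∑ j, u j * γ m j k x))
        = -∑ j, u j * ∑ m, γ i₁ i₂ m x * γ m j k x := by
      simp only [mul_neg, Finset.mul_sum, Finset.sum_neg_distrib]
      rw [Finset.sum_comm]
      exact neg_inj.2 (Finset.sum_congr rfl fun j _ =>
        Finset.sum_congr rfl fun m _ => by ring)
    have hcoeff : ∀ j, ((fun j => fderiv ℝ (γ i₁ j k) x (X i₂ x)) j
        + ∑ m, (fun m j => γ i₁ m j x) j m * (fun j => γ i₂ j k x) m)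
        - ((fun j => fderiv ℝ (γ i₂ j k) x (X i₁ x)) j
          + ∑ m, (fun m j => γ i₂ m j x) j m * (fun j => γ i₁ j k x) m)
        = fderiv ℝ (γ i₁ i₂ k) x (X j x) - ∑ m, γ i₁ i₂ m x * γ m j k x := fun j => key j k
    calc ∑ j, u j * _ = ∑ j, u j * (fderiv ℝ (γ i₁ i₂ k) x (X j x)
          - ∑ m, γ i₁ i₂ m x * γ m j k x) :=
        Finset.sum_congr rfl fun j _ => by rw [hcoeff j]
      _ = _ := by
        rw [hrhs]
        simp only [mul_sub, Finset.sum_sub_distrib]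
        abel
end

section
/- With the notation of the previous statement, suppose Σ ⊆ M × ℝⁿ is a submanifold such that every point (x,u) ∈ Σ satisfies ((Σⱼ uⱼ Xⱼ).γ_{ab}ᵖ)(x) = 0 for all a,b,p (i.e., u is a Killing generator of order 1: the derivative of the curvature/structure functions along Σⱼ uⱼ Xⱼ vanishes at x), and such that each Z_i is tangent to Σ. Then the distribution on Σ spanned by Z₁, …, Z_n is involutive. -/
open VectorField

/-- With `Z_i = X_i − Σ_{j,k} u_j γᵢⱼᵏ ∂_k` on `M × ℝⁿ`: if `Σ` is a submanifold of
`M × ℝⁿ` all of whose points `(x,u)` satisfy the order-1 Killing generator condition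
`((Σⱼ uⱼ Xⱼ).γ_{ab}ᵖ)(x) = 0` for all `a, b, p`, and to which each `Z_i` is tangent,
then the distribution spanned by `Z₁, …, Z_n` along `Σ` is involutive: the bracket of any
two of the `Z_i` at any point of `Σ` lies in the span of the `Z_k` at that point. -/
theorem graph_distribution_involutive
    {n : ℕ} (M : Set (Fin n → ℝ)) (hM : IsOpen M)
    (X : Fin n → (Fin n → ℝ) → (Fin n → ℝ))
    (hXsm : ∀ i, ContDiffOn ℝ (⊤ : ℕ∞) (X i) M)
    (hindep : ∀ x ∈ M, LinearIndependent ℝ (fun i => X i x))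
    (γ : Fin n → Fin n → Fin n → (Fin n → ℝ) → ℝ)
    (hγsm : ∀ i j k, ContDiffOn ℝ (⊤ : ℕ∞) (γ i j k) M)
    (hstruct : ∀ i j, ∀ x ∈ M,
      lieBracket ℝ (X i) (X j) x = ∑ k, γ i j k x • X k x)
    (Z : Fin n → (Fin n → ℝ) × (Fin n → ℝ) → (Fin n → ℝ) × (Fin n → ℝ))
    (hZ : ∀ i q, Z i q = (X i q.1, fun k => -(∑ j, q.2 j * γ i j k q.1)))
    (Sg : Set ((Fin n → ℝ) × (Fin n → ℝ))) (hSgsub : Sg ⊆ M ×ˢ (Set.univ : Set (Fin n → ℝ)))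
    (hKillGen : ∀ q ∈ Sg, ∀ a b p : Fin n,
      ∑ j, q.2 j * fderiv ℝ (γ a b p) q.1 (X j q.1) = 0)
    (htangent : ∀ q ∈ Sg, ∀ i, Z i q ∈ tangentConeAt ℝ Sg q) :
    ∀ q ∈ Sg, ∀ a b : Fin n,
      lieBracket ℝ (Z a) (Z b) q ∈ Submodule.span ℝ (Set.range fun k => Z k q) := by
  intro q hq a b
  have hx : q.1 ∈ M := (hSgsub hq).1
  have hXc : ∀ i, ContDiffAt ℝ (⊤ : ℕ∞) (X i) q.1 := fun i => (hXsm i).contDiffAt (hM.mem_nhds hx)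
  have hXd : ∀ i, DifferentiableAt ℝ (X i) q.1 := fun i => (hXc i).differentiableAt (by simp)
  have hγc : ∀ i j k, ContDiffAt ℝ (⊤ : ℕ∞) (γ i j k) q.1 :=
    fun i j k => (hγsm i j k).contDiffAt (hM.mem_nhds hx)
  have hγd : ∀ i j k, DifferentiableAt ℝ (γ i j k) q.1 :=
    fun i j k => (hγc i j k).differentiableAt (by simp)
  -- antisymmetry of γ at q.1
  have E1 : ∀ i j k, γ j i k q.1 = -(γ i j k q.1) := by
    intro i j k
    have h := hstruct i j q.1 hx
    have h' := hstruct j i q.1 hx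
    have hz : ∑ m, (γ i j m q.1 + γ j i m q.1) • X m q.1 = 0 := by
      have hsw : lieBracket ℝ (X j) (X i) q.1 = - lieBracket ℝ (X i) (X j) q.1 :=
        lieBracket_swap
      rw [h] at hsw
      rw [hsw] at h'
      simp only [add_smul, Finset.sum_add_distrib]
      rw [← h']
      abel
    have := Fintype.linearIndependent_iff.1 (hindep _ hx) _ hz k
    linarith
  -- bracket computation: [X a, [X c, X d]] at q.1
  have hbr : ∀ a c d : Fin n, lieBracket ℝ (X a) (lieBracket ℝ (X c) (X d)) q.1
      = ∑ p, (fderiv ℝ (γ c d p) q.1 (X a q.1) + ∑ k, γ c d k q.1 * γ a k p q.1) • X p q.1 := by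
    intro a c d
    have hev : lieBracket ℝ (X c) (X d) =ᶠ[nhds q.1] fun y => ∑ p, γ c d p y • X p y := by
      filter_upwards [hM.mem_nhds hx] with y hy using hstruct c d y hy
    rw [Filter.EventuallyEq.lieBracket_vectorField_eq (Filter.EventuallyEq.refl _ _) hev]
    have hW : HasFDerivAt (fun y => ∑ p, γ c d p y • X p y)
        (∑ p, (γ c d p q.1 • fderiv ℝ (X p) q.1
          + (fderiv ℝ (γ c d p) q.1).smulRight (X p q.1))) q.1 :=
      HasFDerivAt.fun_sum fun p _ => ((hγd c d p).hasFDerivAt.smul (hXd p).hasFDerivAt)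
    have hlb : lieBracket ℝ (X a) (fun y => ∑ p, γ c d p y • X p y) q.1
        = fderiv ℝ (fun y => ∑ p, γ c d p y • X p y) q.1 (X a q.1)
          - fderiv ℝ (X a) q.1 (∑ p, γ c d p q.1 • X p q.1) := rfl
    rw [hlb, hW.fderiv]
    simp only [ContinuousLinearMap.sum_apply, ContinuousLinearMap.add_apply,
      ContinuousLinearMap.smul_apply, ContinuousLinearMap.smulRight_apply, map_sum, map_smul]
    have hcomb : ∀ p : Fin n, γ c d p q.1 • fderiv ℝ (X p) q.1 (X a q.1)
          + fderiv ℝ (γ c d p) q.1 (X a q.1) • X p q.1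
          - γ c d p q.1 • fderiv ℝ (X a) q.1 (X p q.1)
        = fderiv ℝ (γ c d p) q.1 (X a q.1) • X p q.1
          + γ c d p q.1 • ∑ k, γ a p k q.1 • X k q.1 := by
      intro p
      have hb : fderiv ℝ (X p) q.1 (X a q.1) - fderiv ℝ (X a) q.1 (X p q.1)
          = ∑ k, γ a p k q.1 • X k q.1 := hstruct a p q.1 hx
      rw [← hb]
      module
    rw [← Finset.sum_sub_distrib]
    rw [Finset.sum_congr rfl fun p _ => hcomb p]
    rw [Finset.sum_add_distrib]
    have hrhs : ∀ p : Fin n,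
        (fderiv ℝ (γ c d p) q.1 (X a q.1) + ∑ k, γ c d k q.1 * γ a k p q.1) • X p q.1
        = fderiv ℝ (γ c d p) q.1 (X a q.1) • X p q.1
          + ∑ k, (γ c d k q.1 * γ a k p q.1) • X p q.1 := by
      intro p
      rw [add_smul, Finset.sum_smul]
    rw [Finset.sum_congr rfl fun p _ => hrhs p, Finset.sum_add_distrib]
    congr 1
    have : ∀ p : Fin n, γ c d p q.1 • ∑ k, γ a p k q.1 • X k q.1
        = ∑ k, (γ c d p q.1 * γ a p k q.1) • X k q.1 := by
      intro p
      rw [Finset.smul_sum]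
      exact Finset.sum_congr rfl fun k _ => (smul_smul _ _ _)
    rw [Finset.sum_congr rfl fun p _ => this p]
    exact Finset.sum_comm
  -- Jacobi-type identity in coordinates at q.1
  have E2 : ∀ a b c p : Fin n,
      fderiv ℝ (γ b c p) q.1 (X a q.1) + ∑ k, γ b c k q.1 * γ a k p q.1
      + (fderiv ℝ (γ a b p) q.1 (X c q.1) + ∑ k, γ a b k q.1 * γ c k p q.1)
      - (fderiv ℝ (γ a c p) q.1 (X b q.1) + ∑ k, γ a c k q.1 * γ b k p q.1) = 0 := by
    intro a b c p
    have hL := leibniz_identity_lieBracket (𝕜 := ℝ) (n := ((⊤ : ℕ∞) : WithTop ℕ∞)) (by simp; exact (WithTop.coe_le_coe.2 (le_top : (2 : ℕ∞) ≤ ⊤)))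
      ((hXc a).of_le (by exact_mod_cast le_top)) ((hXc b).of_le (by exact_mod_cast le_top)) ((hXc c).of_le (by exact_mod_cast le_top))
    have hmid : lieBracket ℝ (lieBracket ℝ (X a) (X b)) (X c) q.1
        = - lieBracket ℝ (X c) (lieBracket ℝ (X a) (X b)) q.1 := lieBracket_swap
    rw [hmid, hbr a b c, hbr c a b, hbr b a c] at hL
    have hz : ∑ p', ((fderiv ℝ (γ b c p') q.1 (X a q.1) + ∑ k, γ b c k q.1 * γ a k p' q.1)
        + (fderiv ℝ (γ a b p') q.1 (X c q.1) + ∑ k, γ a b k q.1 * γ c k p' q.1)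
        - (fderiv ℝ (γ a c p') q.1 (X b q.1) + ∑ k, γ a c k q.1 * γ b k p' q.1)) • X p' q.1
        = 0 := by
      simp only [sub_smul, add_smul, Finset.sum_sub_distrib, Finset.sum_add_distrib] at hL ⊢
      rw [hL]
      abel
    exact Fintype.linearIndependent_iff.1 (hindep _ hx) _ hz p
  -- explicit form and derivative of Z
  have hZfun : ∀ i, Z i = fun r : (Fin n → ℝ) × (Fin n → ℝ) =>
      ((X i r.1, fun k => -(∑ j, r.2 j * γ i j k r.1)) : (Fin n → ℝ) × (Fin n → ℝ)) :=
    fun i => funext (hZ i)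
  have hDZ : ∀ i, HasFDerivAt (Z i)
      (((fderiv ℝ (X i) q.1).comp (ContinuousLinearMap.fst ℝ (Fin n → ℝ) (Fin n → ℝ))).prod
        (ContinuousLinearMap.pi fun k =>
          -(∑ j, (q.2 j • ((fderiv ℝ (γ i j k) q.1).comp
              (ContinuousLinearMap.fst ℝ (Fin n → ℝ) (Fin n → ℝ)))
            + γ i j k q.1 • ((ContinuousLinearMap.proj j : (Fin n → ℝ) →L[ℝ] ℝ).comp
              (ContinuousLinearMap.snd ℝ (Fin n → ℝ) (Fin n → ℝ))))))) q := by
    intro i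
    rw [hZfun i]
    apply HasFDerivAt.prodMk
    · exact (hXd i).hasFDerivAt.comp q hasFDerivAt_fst
    · apply hasFDerivAt_pi.2
      intro k
      apply HasFDerivAt.neg
      apply HasFDerivAt.fun_sum
      intro j _
      have hc : HasFDerivAt (fun r : (Fin n → ℝ) × (Fin n → ℝ) => r.2 j)
          ((ContinuousLinearMap.proj j : (Fin n → ℝ) →L[ℝ] ℝ).comp
            (ContinuousLinearMap.snd ℝ (Fin n → ℝ) (Fin n → ℝ))) q :=
        by have h := (hasFDerivAt_apply (𝕜 := ℝ) j q.2).comp q (hasFDerivAt_snd (p := q)); exact h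
      have hd : HasFDerivAt (fun r : (Fin n → ℝ) × (Fin n → ℝ) => γ i j k r.1)
          ((fderiv ℝ (γ i j k) q.1).comp (ContinuousLinearMap.fst ℝ _ _)) q :=
        (hγd i j k).hasFDerivAt.comp q hasFDerivAt_fst
      exact hc.mul hd
  have key : lieBracket ℝ (Z a) (Z b) q = ∑ k, γ a b k q.1 • Z k q := by
    have hlb : lieBracket ℝ (Z a) (Z b) q
        = fderiv ℝ (Z b) q (Z a q) - fderiv ℝ (Z a) q (Z b q) := rfl
    rw [hlb, (hDZ a).fderiv, (hDZ b).fderiv, hZ a q, hZ b q,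
      Finset.sum_congr rfl fun k (_ : k ∈ Finset.univ) => by rw [hZ k q]]
    apply Prod.ext
    · simp only [ContinuousLinearMap.prod_apply, ContinuousLinearMap.coe_comp',
        Function.comp_apply, ContinuousLinearMap.coe_fst', Prod.fst_sub,
        Prod.smul_mk, Prod.fst_sum]
      exact hstruct a b q.1 hx
    · funext p
      simp only [ContinuousLinearMap.prod_apply, Prod.snd_sub, Prod.smul_mk, Prod.snd_sum,
        ContinuousLinearMap.pi_apply, ContinuousLinearMap.neg_apply,
        ContinuousLinearMap.sum_apply, ContinuousLinearMap.add_apply,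
        ContinuousLinearMap.smul_apply, ContinuousLinearMap.coe_comp', Function.comp_apply,
        ContinuousLinearMap.coe_fst', ContinuousLinearMap.coe_snd',
        ContinuousLinearMap.proj_apply, Pi.sub_apply, Pi.neg_apply, Finset.sum_apply,
        Pi.smul_apply, smul_eq_mul]
      have hK := hKillGen q hq a b p
      have hsub : ∀ j : Fin n,
          q.2 j * (fderiv ℝ (γ b j p) q.1) (X a q.1)
            - q.2 j * (fderiv ℝ (γ a j p) q.1) (X b q.1)
          = q.2 j * ∑ k, γ a j k q.1 * γ b k p q.1
            - q.2 j * ∑ k, γ b j k q.1 * γ a k p q.1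
            - q.2 j * (fderiv ℝ (γ a b p) q.1) (X j q.1)
            - q.2 j * ∑ k, γ a b k q.1 * γ j k p q.1 := by
        intro j
        linear_combination q.2 j * E2 a b j p
      have hS : ∑ j, (q.2 j * (fderiv ℝ (γ b j p) q.1) (X a q.1))
            - ∑ j, (q.2 j * (fderiv ℝ (γ a j p) q.1) (X b q.1))
          = ∑ j, (q.2 j * ∑ k, γ a j k q.1 * γ b k p q.1)
            - ∑ j, (q.2 j * ∑ k, γ b j k q.1 * γ a k p q.1)
            - ∑ j, (q.2 j * (fderiv ℝ (γ a b p) q.1) (X j q.1))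
            - ∑ j, (q.2 j * ∑ k, γ a b k q.1 * γ j k p q.1) := by
        rw [← Finset.sum_sub_distrib, ← Finset.sum_sub_distrib, ← Finset.sum_sub_distrib,
          ← Finset.sum_sub_distrib]
        exact Finset.sum_congr rfl fun j _ => hsub j
      have c1 : ∑ j, (γ b j p q.1 * ∑ m, q.2 m * γ a m j q.1)
          = ∑ j, (q.2 j * ∑ k, γ a j k q.1 * γ b k p q.1) := by
        simp only [Finset.mul_sum]
        rw [Finset.sum_comm]
        exact Finset.sum_congr rfl fun j _ => Finset.sum_congr rfl fun k _ => by ring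
      have c2 : ∑ j, (γ a j p q.1 * ∑ m, q.2 m * γ b m j q.1)
          = ∑ j, (q.2 j * ∑ k, γ b j k q.1 * γ a k p q.1) := by
        simp only [Finset.mul_sum]
        rw [Finset.sum_comm]
        exact Finset.sum_congr rfl fun j _ => Finset.sum_congr rfl fun k _ => by ring
      have c3 : ∑ k, (γ a b k q.1 * ∑ j, q.2 j * γ j k p q.1)
          = ∑ j, (q.2 j * ∑ k, γ a b k q.1 * γ j k p q.1) := by
        simp only [Finset.mul_sum]
        rw [Finset.sum_comm]
        exact Finset.sum_congr rfl fun j _ => Finset.sum_congr rfl fun k _ => by ring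
      have c4 : ∑ k, (γ a b k q.1 * ∑ j, q.2 j * γ k j p q.1)
          = -∑ k, (γ a b k q.1 * ∑ j, q.2 j * γ j k p q.1) := by
        rw [← Finset.sum_neg_distrib]
        refine Finset.sum_congr rfl fun k _ => ?_
        have : ∑ j, q.2 j * γ k j p q.1 = -∑ j, q.2 j * γ j k p q.1 := by
          rw [← Finset.sum_neg_distrib]
          exact Finset.sum_congr rfl fun j _ => by rw [E1 j k p]; ring
        rw [this]; ring
      have lhs1 : ∑ j, (q.2 j * (fderiv ℝ (γ b j p) q.1) (X a q.1)
            + γ b j p q.1 * -∑ m, q.2 m * γ a m j q.1)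
          = ∑ j, (q.2 j * (fderiv ℝ (γ b j p) q.1) (X a q.1))
            - ∑ j, (γ b j p q.1 * ∑ m, q.2 m * γ a m j q.1) := by
        rw [← Finset.sum_sub_distrib]
        exact Finset.sum_congr rfl fun j _ => by ring
      have lhs2 : ∑ j, (q.2 j * (fderiv ℝ (γ a j p) q.1) (X b q.1)
            + γ a j p q.1 * -∑ m, q.2 m * γ b m j q.1)
          = ∑ j, (q.2 j * (fderiv ℝ (γ a j p) q.1) (X b q.1))
            - ∑ j, (γ a j p q.1 * ∑ m, q.2 m * γ b m j q.1) := by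
        rw [← Finset.sum_sub_distrib]
        exact Finset.sum_congr rfl fun j _ => by ring
      have rhs1 : ∑ k, (γ a b k q.1 * -∑ j, q.2 j * γ k j p q.1)
          = -∑ k, (γ a b k q.1 * ∑ j, q.2 j * γ k j p q.1) := by
        rw [← Finset.sum_neg_distrib]
        exact Finset.sum_congr rfl fun k _ => by ring
      rw [lhs1, lhs2, rhs1, c1, c2, c4, c3]
      linarith [hS, hK]
  rw [key]
  exact Submodule.sum_mem _ fun k _ =>
    Submodule.smul_mem _ _ (Submodule.subset_span ⟨k, rfl⟩)
end

section
/- Let M be a smooth n-manifold with parallelism (X₁,…,X_n), γᵢⱼᵏ the structure functions, and X a vector field on M with coefficients u_k (X = Σ u_k X_k). Then X is a Killing field of the parallelism if and only if the graph Γ_X = {(x, u₁(x), …, u_n(x))} ⊆ M × ℝⁿ is an integral manifold of the distribution Δ spanned by the vector fields Z_i = X_i − Σ_{j,k} u_j γᵢⱼᵏ ∂_k, i.e., T_{(x,X(x))}Γ_X = Δ_{(x,X(x))} for all x. -/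
open VectorField

/-- For a parallelism `(X₁,…,X_n)` on an open `M ⊆ ℝⁿ` with structure functions `γᵢⱼᵏ`
and a vector field `X = Σ u_k X_k`:  `X` is a Killing field of the parallelism (commutes
with every `Xᵢ`) if and only if the graph of `x ↦ (x, u(x))` is an integral manifold of
the distribution `Δ` spanned by `Z_i = X_i − Σ_{j,k} u_j γᵢⱼᵏ ∂_k`, i.e. its tangent
space at `(x, u(x))` equals `Δ_{(x,u(x))}` for every `x ∈ M`. -/
theorem killing_iff_graph_integral
    {n : ℕ} (M : Set (Fin n → ℝ)) (hM : IsOpen M)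
    (X : Fin n → (Fin n → ℝ) → (Fin n → ℝ))
    (hXsm : ∀ i, ContDiffOn ℝ (⊤ : ℕ∞) (X i) M)
    (hindep : ∀ x ∈ M, LinearIndependent ℝ (fun i => X i x))
    (γ : Fin n → Fin n → Fin n → (Fin n → ℝ) → ℝ)
    (hγsm : ∀ i j k, ContDiffOn ℝ (⊤ : ℕ∞) (γ i j k) M)
    (hstruct : ∀ i j, ∀ x ∈ M,
      lieBracket ℝ (X i) (X j) x = ∑ k, γ i j k x • X k x)
    (u : Fin n → (Fin n → ℝ) → ℝ)
    (husm : ∀ k, ContDiffOn ℝ (⊤ : ℕ∞) (u k) M)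
    (Ufun : (Fin n → ℝ) → (Fin n → ℝ)) (hU : ∀ x k, Ufun x k = u k x)
    (Z : Fin n → (Fin n → ℝ) × (Fin n → ℝ) → (Fin n → ℝ) × (Fin n → ℝ))
    (hZ : ∀ i q, Z i q = (X i q.1, fun k => -(∑ j, q.2 j * γ i j k q.1))) :
    (∀ i, ∀ x ∈ M, lieBracket ℝ (X i) (fun y => ∑ k, u k y • X k y) x = 0) ↔
      (∀ x ∈ M,
        LinearMap.range (((ContinuousLinearMap.id ℝ (Fin n → ℝ)).prod (fderiv ℝ Ufun x) :
          (Fin n → ℝ) →L[ℝ] (Fin n → ℝ) × (Fin n → ℝ)) : (Fin n → ℝ) →ₗ[ℝ] (Fin n → ℝ) × (Fin n → ℝ)) =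
          Submodule.span ℝ (Set.range fun i => Z i (x, Ufun x))) := by
  -- differentiability facts
  have hXd : ∀ i, ∀ x ∈ M, DifferentiableAt ℝ (X i) x := fun i x hx =>
    ((hXsm i).contDiffAt (hM.mem_nhds hx)).differentiableAt (by simp)
  have hud : ∀ k, ∀ x ∈ M, DifferentiableAt ℝ (u k) x := fun k x hx =>
    ((husm k).contDiffAt (hM.mem_nhds hx)).differentiableAt (by simp)
  -- Ufun is the pi-function of the u k
  have hUfun : Ufun = fun x k => u k x := funext fun x => funext fun k => hU x k
  have hDU : ∀ x ∈ M, fderiv ℝ Ufun x = ContinuousLinearMap.pi fun k => fderiv ℝ (u k) x := by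
    intro x hx
    rw [hUfun]
    exact fderiv_pi fun k => hud k x hx
  -- the key bracket formula
  have hbr : ∀ i, ∀ x ∈ M,
      lieBracket ℝ (X i) (fun y => ∑ k, u k y • X k y) x =
        ∑ k, (fderiv ℝ (u k) x (X i x) + ∑ j, u j x * γ i j k x) • X k x := by
    intro i x hx
    have hdsmul : ∀ k, DifferentiableAt ℝ (fun y => u k y • X k y) x :=
      fun k => (hud k x hx).smul (hXd k x hx)
    rw [lieBracket_eq]
    beta_reduce
    have h1 : fderiv ℝ (fun y => ∑ k, u k y • X k y) x =
        ∑ k, fderiv ℝ (fun y => u k y • X k y) x := by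
      rw [fderiv_fun_sum fun k _ => hdsmul k]
    have h2 : ∀ k, fderiv ℝ (fun y => u k y • X k y) x =
        u k x • fderiv ℝ (X k) x + (fderiv ℝ (u k) x).smulRight (X k x) :=
      fun k => fderiv_smul (hud k x hx) (hXd k x hx)
    rw [h1]
    simp only [ContinuousLinearMap.sum_apply, h2, ContinuousLinearMap.add_apply,
      ContinuousLinearMap.smul_apply, ContinuousLinearMap.smulRight_apply, map_sum, map_smul]
    have hlie : ∀ k, fderiv ℝ (X k) x (X i x) - fderiv ℝ (X i) x (X k x)
        = ∑ m, γ i k m x • X m x := fun k =>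
      (congrFun (lieBracket_eq (𝕜 := ℝ) (V := X i) (W := X k)) x).symm.trans (hstruct i k x hx)
    have key : ∀ k, u k x • (fderiv ℝ (X k) x) (X i x) - u k x • (fderiv ℝ (X i) x) (X k x)
        = u k x • ∑ m, γ i k m x • X m x := by
      intro k; rw [← smul_sub, hlie k]
    calc (∑ k, (u k x • (fderiv ℝ (X k) x) (X i x) + (fderiv ℝ (u k) x) (X i x) • X k x))
          - ∑ k, u k x • (fderiv ℝ (X i) x) (X k x)
        = ∑ k, (fderiv ℝ (u k) x) (X i x) • X k x
          + ∑ k, (u k x • (fderiv ℝ (X k) x) (X i x) - u k x • (fderiv ℝ (X i) x) (X k x)) := by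
          rw [← Finset.sum_sub_distrib, ← Finset.sum_add_distrib]
          exact Finset.sum_congr rfl fun k _ => by abel
      _ = ∑ k, (fderiv ℝ (u k) x) (X i x) • X k x
          + ∑ k, u k x • ∑ m, γ i k m x • X m x := by
          congr 1; exact Finset.sum_congr rfl fun k _ => key k
      _ = ∑ k, (fderiv ℝ (u k) x (X i x) + ∑ j, u j x * γ i j k x) • X k x := by
          simp only [add_smul, Finset.sum_add_distrib]
          congr 1
          simp only [Finset.smul_sum, smul_smul]
          rw [Finset.sum_comm]
          exact Finset.sum_congr rfl fun m _ => by rw [Finset.sum_smul]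
  -- the pointwise Killing condition in coordinates
  have hkey : ∀ x ∈ M, ∀ i,
      (lieBracket ℝ (X i) (fun y => ∑ k, u k y • X k y) x = 0 ↔
        ∀ k, fderiv ℝ (u k) x (X i x) = -(∑ j, u j x * γ i j k x)) := by
    intro x hx i
    rw [hbr i x hx]
    constructor
    · intro h k
      have := linearIndependent_iff'.1 (hindep x hx) Finset.univ
        (fun k => fderiv ℝ (u k) x (X i x) + ∑ j, u j x * γ i j k x) h k (Finset.mem_univ k)
      have h2 : fderiv ℝ (u k) x (X i x) + ∑ j, u j x * γ i j k x = 0 := this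
      linarith
    · intro h
      have : ∀ k, (fderiv ℝ (u k) x (X i x) + ∑ j, u j x * γ i j k x) = 0 := by
        intro k; rw [h k]; ring
      simp only [this, zero_smul, Finset.sum_const_zero]
  -- the range condition in coordinates
  have hrange : ∀ x ∈ M,
      ((LinearMap.range (((ContinuousLinearMap.id ℝ (Fin n → ℝ)).prod (fderiv ℝ Ufun x) :
          (Fin n → ℝ) →L[ℝ] (Fin n → ℝ) × (Fin n → ℝ)) : (Fin n → ℝ) →ₗ[ℝ] (Fin n → ℝ) × (Fin n → ℝ)) =
          Submodule.span ℝ (Set.range fun i => Z i (x, Ufun x))) ↔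
        ∀ i k, fderiv ℝ (u k) x (X i x) = -(∑ j, u j x * γ i j k x)) := by
    intro x hx
    set D := fderiv ℝ Ufun x with hD
    have hDapp : ∀ v k, D v k = fderiv ℝ (u k) x v := by
      intro v k; rw [hD, hDU x hx]; rfl
    have hZval : ∀ i, Z i (x, Ufun x) =
        (X i x, fun k => -(∑ j, u j x * γ i j k x)) := by
      intro i; rw [hZ]
      simp only [Prod.mk.injEq, true_and]
      funext k; congr 1; exact Finset.sum_congr rfl fun j _ => by rw [hU]
    constructor
    · intro h i k
      have hmem : Z i (x, Ufun x) ∈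
          LinearMap.range (((ContinuousLinearMap.id ℝ (Fin n → ℝ)).prod D :
            (Fin n → ℝ) →L[ℝ] (Fin n → ℝ) × (Fin n → ℝ)) : (Fin n → ℝ) →ₗ[ℝ] (Fin n → ℝ) × (Fin n → ℝ)) := by
        rw [h]; exact Submodule.subset_span ⟨i, rfl⟩
      obtain ⟨v, hv⟩ := hmem
      rw [hZval i] at hv
      have hv1 : v = X i x := congrArg Prod.fst hv
      have hv2 : D v = fun k => -(∑ j, u j x * γ i j k x) := congrArg Prod.snd hv
      rw [hv1] at hv2
      rw [← hDapp, hv2]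
    · intro h
      have hDXi : ∀ i, D (X i x) = fun k => -(∑ j, u j x * γ i j k x) := by
        intro i; funext k; rw [hDapp]; exact h i k
      apply le_antisymm
      · intro p hp
        obtain ⟨y, hy⟩ := hp
        obtain ⟨v, w⟩ := p
        have hy1 : y = v := congrArg Prod.fst hy
        have hy2 : D y = w := congrArg Prod.snd hy
        rw [hy1] at hy2
        -- express v in the basis (X i x)
        have hspan : Submodule.span ℝ (Set.range fun i => X i x) = ⊤ :=
          (hindep x hx).span_eq_top_of_card_eq_finrank'
            (by simp [Module.finrank_fin_fun])
        have hv : v ∈ Submodule.span ℝ (Set.range fun i => X i x) := by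
          rw [hspan]; trivial
        obtain ⟨c, hc⟩ := (Submodule.mem_span_range_iff_exists_fun ℝ).1 hv
        have : (v, w) = ∑ i, c i • Z i (x, Ufun x) := by
          have hsnd : w = ∑ i, c i • (fun k => -(∑ j, u j x * γ i j k x) : Fin n → ℝ) := by
            rw [← hy2, ← hc]
            rw [map_sum]
            exact Finset.sum_congr rfl fun i _ => by rw [map_smul, hDXi i]
          rw [Prod.ext_iff]
          constructor
          · simp only [Prod.fst_sum, Prod.smul_fst, hZval, ← hc]
          · simp only [Prod.snd_sum, Prod.smul_snd, hZval]
            exact hsnd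
        rw [this]
        exact Submodule.sum_mem _ fun i _ =>
          Submodule.smul_mem _ _ (Submodule.subset_span ⟨i, rfl⟩)
      · rw [Submodule.span_le]
        rintro - ⟨i, rfl⟩
        refine ⟨X i x, ?_⟩
        beta_reduce
        rw [hZval i]
        ext <;> simp [hDXi i]
    -- done hrange
  constructor
  · intro h x hx
    rw [hrange x hx]
    intro i k
    exact (hkey x hx i).1 (h i x hx) k
  · intro h i x hx
    rw [hkey x hx i]
    intro k
    exact (hrange x hx).1 (h x hx) i k
end

section
/- Let f : [0,1] → ℝ^N be a C¹ curve satisfying a linear ODE of the form f'(t) = L(t) f(t) where L : [0,1] → Hom(ℝ^N, ℝ^N) is continuous, and suppose f(0) = 0. Then f ≡ 0 on [0,1]. More specifically, in the setting of a parallelism: if the functions t ↦ 𝒟^r K(γ(t)) ⌟ A_t (for 1 ≤ r ≤ s) satisfy a homogeneous linear first-order ODE system with continuous coefficients along the curve γ(t) = φ^t_{X̃}(x), and vanish at t = 0 (because A ∈ Kill^s(x)), then they vanish for all t; hence A_t = (φ^t_{X̃})_* A ∈ Kill^s(γ(t)) for all t ∈ [−1,1]. -/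
open Set


/-- Auxiliary: a C¹ solution of `f' = L t (f t)` on `[a,b]` vanishing at `a` vanishes on `[a,b]`. -/
lemma linear_ode_zero_right {E : Type*} [NormedAddCommGroup E] [NormedSpace ℝ E]
    {a b : ℝ} (L : ℝ → E →L[ℝ] E) (hL : Continuous L) (f : ℝ → E)
    (hf : ∀ t ∈ Icc a b, HasDerivAt f (L t (f t)) t) (h0 : f a = 0) :
    ∀ t ∈ Icc a b, f t = 0 := by
  rcases le_or_gt a b with hab | hab
  · -- clamp
    set c : ℝ → ℝ := fun t => max a (min b t) with hc
    have hcc : Continuous c := continuous_const.max (continuous_const.min continuous_id)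
    have hcin : ∀ t, c t ∈ Icc a b := fun t =>
      ⟨le_max_left _ _, max_le hab (min_le_left _ _)⟩
    have hceq : ∀ t ∈ Icc a b, c t = t := by
      intro t ht
      simp [hc, min_eq_right ht.2, max_eq_right ht.1]
    obtain ⟨C, hC⟩ : ∃ C, ∀ t, ‖L (c t)‖ ≤ C := by
      obtain ⟨C, hC⟩ := (isCompact_Icc (a := a) (b := b)).exists_bound_of_continuousOn
        hL.continuousOn
      exact ⟨C, fun t => hC _ (hcin t)⟩
    set K : NNReal := ⟨max C 0, le_max_right _ _⟩ with hK
    have hlip : ∀ t : ℝ, LipschitzWith K (fun x => L (c t) x) := by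
      intro t
      refine ((L (c t)).lipschitz).weaken ?_
      simp only [← NNReal.coe_le_coe, coe_nnnorm, hK]
      exact NNReal.coe_le_coe.mp (le_trans (hC t) (le_max_left _ _))
    have := ODE_solution_unique_of_mem_Icc_right
      (v := fun t x => L (c t) x) (s := fun _ => (univ : Set E)) (K := K)
      (fun t _ => lipschitzOnWith_univ.mpr (hlip t))
      (f := f) (g := fun _ => 0) (a := a) (b := b)
      (fun t ht => ((hf t ht).continuousAt).continuousWithinAt)
      (fun t ht => by
        have ht' : t ∈ Icc a b := Ico_subset_Icc_self ht
        show HasDerivWithinAt f (L (c t) (f t)) (Ici t) t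
        rw [hceq t ht']
        exact ((hf t ht')).hasDerivWithinAt)
      (fun _ _ => trivial)
      continuousOn_const
      (fun t _ => by simpa using (hasDerivAt_const t (0 : E)).hasDerivWithinAt)
      (fun _ _ => trivial)
      (by simpa using h0)
    exact this
  · intro t ht
    exact absurd (ht.1.trans ht.2) (not_le.mpr hab)

/-- Auxiliary: same with the initial condition at the right endpoint. -/
lemma linear_ode_zero_left {E : Type*} [NormedAddCommGroup E] [NormedSpace ℝ E]
    {a b : ℝ} (L : ℝ → E →L[ℝ] E) (hL : Continuous L) (f : ℝ → E)
    (hf : ∀ t ∈ Icc a b, HasDerivAt f (L t (f t)) t) (h0 : f b = 0) :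
    ∀ t ∈ Icc a b, f t = 0 := by
  have key : ∀ u ∈ Icc (-b) (-a), f (-u) = 0 := by
    refine linear_ode_zero_right (fun u => -(L (-u))) (by continuity)
      (fun u => f (-u)) ?_ (by simpa using h0)
    intro u hu
    have h1 : (-u) ∈ Icc a b := ⟨le_neg.mp hu.2, neg_le.mp hu.1⟩
    have := ((hf (-u) h1).scomp u (by simpa using (hasDerivAt_neg u)))
    simpa [Function.comp_def] using this
  intro t ht
  have := key (-t) ⟨neg_le_neg ht.2, neg_le_neg ht.1⟩
  simpa using this

/-- (1) A `C¹` solution of a homogeneous linear ODE `f' = L(t) f` with continuous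
coefficients and `f 0 = 0` vanishes identically on `[0,1]`.
(2) In the parallelism setting: if the contractions `t ↦ 𝒟^r K(γ(t)) ⌟ A_t` (for
`1 ≤ r ≤ s`), encoded as functions `g r : ℝ → F`, satisfy a homogeneous linear
first-order ODE system with continuous coefficients along the curve `γ` and vanish at
`t = 0` (because `A ∈ Kill^s(x)`), then they vanish for all `t ∈ [-1,1]`; hence
`A_t = (φ^t_{X̃})_* A ∈ Kill^s(γ(t))` for all `t ∈ [-1,1]`. -/
theorem linear_ode_vanishing_and_killing_generators
    {F : Type*} [NormedAddCommGroup F] [NormedSpace ℝ F] [FiniteDimensional ℝ F]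
    -- Part (1): the scalar statement
    (L : ℝ → F →L[ℝ] F) (hL : Continuous L) (f : ℝ → F)
    (hf : ∀ t ∈ Icc (0 : ℝ) 1, HasDerivAt f (L t (f t)) t) (hf0 : f 0 = 0)
    -- Part (2): the parallelism setting
    {M 𝔤 : Type*} (s : ℕ) (γ : ℝ → M) (A : ℝ → 𝔤) (Kill : M → Set 𝔤)
    (g : Fin s → ℝ → F)
    (Lsys : ℝ → (Fin s → F) →L[ℝ] (Fin s → F)) (hLsys : Continuous Lsys)
    (hgode : ∀ t ∈ Icc (-1 : ℝ) 1, HasDerivAt (fun u => fun r => g r u)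
      (Lsys t (fun r => g r t)) t)
    (hg0 : ∀ r, g r 0 = 0)
    (hKill : ∀ t, A t ∈ Kill (γ t) ↔ ∀ r : Fin s, g r t = 0) :
    (∀ t ∈ Icc (0 : ℝ) 1, f t = 0) ∧
      (∀ t ∈ Icc (-1 : ℝ) 1, ∀ r : Fin s, g r t = 0) ∧
      (∀ t ∈ Icc (-1 : ℝ) 1, A t ∈ Kill (γ t)) := by
  have part1 : ∀ t ∈ Icc (0 : ℝ) 1, f t = 0 :=
    linear_ode_zero_right L hL f hf hf0
  have hG0 : (fun r : Fin s => g r 0) = 0 := funext fun r => hg0 r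
  have hpos : ∀ t ∈ Icc (0 : ℝ) 1, (fun r : Fin s => g r t) = 0 := by
    have := linear_ode_zero_right Lsys hLsys (fun u => fun r => g r u)
      (fun t ht => hgode t ⟨le_trans (by norm_num) ht.1, ht.2⟩) hG0
    exact this
  have hneg : ∀ t ∈ Icc (-1 : ℝ) 0, (fun r : Fin s => g r t) = 0 := by
    have := linear_ode_zero_left Lsys hLsys (fun u => fun r => g r u)
      (fun t ht => hgode t ⟨ht.1, le_trans ht.2 (by norm_num)⟩) hG0
    exact this
  have part2 : ∀ t ∈ Icc (-1 : ℝ) 1, ∀ r : Fin s, g r t = 0 := by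
    intro t ht r
    rcases le_or_gt t 0 with h | h
    · exact congrFun (hneg t ⟨ht.1, h⟩) r
    · exact congrFun (hpos t ⟨h.le, ht.2⟩) r
  exact ⟨part1, part2, fun t ht => (hKill t).mpr (part2 t ht)⟩
end
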